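/- arXiv:1808.05709 — 5 statements merged into one kernel-verified Lean document; each statement's English description precedes it below -/
import Mathlib

section
/- Let V(K), W(K) be finite-dimensional subspaces of L²(K)^d and L²(K) with ∇W(K) ⊂ V(K). Let c be a symmetric positive definite d×d matrix field on K with largest eigenvalue bounded by λ_max. Given u_h ∈ W(K) and û_h ∈ L²(∂K), define q_h ∈ V(K) by (c q_h, v)_K = (u_h, ∇·v)_K − ⟨û_h, v·n⟩_{∂K} for all v ∈ V(K). Then ‖∇u_h‖_K ≤ λ_max^{1/2} ‖q_h‖_{c,K} + C_{∇W} h_K^{-1/2} ‖u_h − û_h‖_{∂K}, where C_{∇W} = sup{ h_K^{1/2} ‖v·n‖_{∂K} / ‖v‖_K : v ∈ ∇W(K), v ≠ 0 } and ‖q‖_{c,K}² = (c q, q)_K. -/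
open scoped RealInnerProductSpace

lemma cs_psd {E : Type*} [NormedAddCommGroup E] [InnerProductSpace ℝ E]
    (c : E →ₗ[ℝ] E)
    (hc_sym : ∀ x y : E, ⟪c x, y⟫ = ⟪x, c y⟫)
    (hc_pos : ∀ x : E, x ≠ 0 → 0 < ⟪c x, x⟫) (x y : E) :
    ⟪c x, y⟫ ≤ Real.sqrt ⟪c x, x⟫ * Real.sqrt ⟪c y, y⟫ := by
  have hnn : ∀ z : E, 0 ≤ ⟪c z, z⟫ := by
    intro z
    rcases eq_or_ne z 0 with rfl | hz
    · simp
    · exact (hc_pos z hz).le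
  rcases eq_or_ne y 0 with rfl | hy
  · simp
  · have ha : 0 < ⟪c y, y⟫ := hc_pos y hy
    set t : ℝ := ⟪c x, y⟫ / ⟪c y, y⟫ with ht
    have h0 : 0 ≤ ⟪c (x - t • y), x - t • y⟫ := hnn _
    have hsym : ⟪c y, x⟫ = ⟪c x, y⟫ := by
      rw [hc_sym y x, real_inner_comm]
    have hexp : ⟪c (x - t • y), x - t • y⟫
        = ⟪c x, x⟫ - ⟪c x, y⟫ ^ 2 / ⟪c y, y⟫ := by
      simp only [map_sub, map_smul, inner_sub_left, inner_sub_right,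
        inner_smul_left, inner_smul_right, real_inner_smul_left, hsym, conj_trivial]
      rw [ht]
      field_simp [ht]
      ring
    have hsq : ⟪c x, y⟫ ^ 2 ≤ ⟪c x, x⟫ * ⟪c y, y⟫ := by
      rw [hexp] at h0
      have := sub_nonneg.mp h0
      calc ⟪c x, y⟫ ^ 2 = ⟪c x, y⟫ ^ 2 / ⟪c y, y⟫ * ⟪c y, y⟫ := by field_simp
        _ ≤ ⟪c x, x⟫ * ⟪c y, y⟫ := mul_le_mul_of_nonneg_right this ha.le
    calc ⟪c x, y⟫ ≤ |⟪c x, y⟫| := le_abs_self _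
      _ = Real.sqrt (⟪c x, y⟫ ^ 2) := (Real.sqrt_sq_eq_abs _).symm
      _ ≤ Real.sqrt (⟪c x, x⟫ * ⟪c y, y⟫) := Real.sqrt_le_sqrt hsq
      _ = Real.sqrt ⟪c x, x⟫ * Real.sqrt ⟪c y, y⟫ := Real.sqrt_mul (hnn x) _


/-- With ∇W(K) ⊂ V(K), c SPD with largest eigenvalue ≤ λ_max, and q_h ∈ V(K)
defined by (c q_h, v)_K = (u_h, ∇·v)_K − ⟨û_h, v·n⟩_{∂K} for all v ∈ V(K), one has
‖∇u_h‖_K ≤ λ_max^{1/2} ‖q_h‖_{c,K} + C_{∇W} h_K^{-1/2} ‖u_h − û_h‖_{∂K}. -/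
theorem stmt4 {E F B : Type*}
    [NormedAddCommGroup E] [InnerProductSpace ℝ E]
    [NormedAddCommGroup F] [InnerProductSpace ℝ F]
    [NormedAddCommGroup B] [InnerProductSpace ℝ B]
    (V : Submodule ℝ E) (W : Submodule ℝ F)
    [FiniteDimensional ℝ V] [FiniteDimensional ℝ W]
    (grad : F →ₗ[ℝ] E) (dvg : E →ₗ[ℝ] F) (ntr : E →ₗ[ℝ] B) (trc : F →ₗ[ℝ] B)
    (hgradW : ∀ w ∈ W, grad w ∈ V)
    (c : E →ₗ[ℝ] E) (lamMax hK : ℝ) (hhK : 0 < hK)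
    (hc_sym : ∀ x y : E, ⟪c x, y⟫ = ⟪x, c y⟫)
    (hc_pos : ∀ x : E, x ≠ 0 → 0 < ⟪c x, x⟫)
    (hlam : ∀ x : E, ⟪c x, x⟫ ≤ lamMax * ‖x‖ ^ 2)
    (uh : F) (huh : uh ∈ W) (uhat : B) (qh : E) (hqh : qh ∈ V)
    (hdef : ∀ v ∈ V, ⟪c qh, v⟫ = ⟪uh, dvg v⟫ - ⟪uhat, ntr v⟫)
    (hibp : ∀ w ∈ W, ∀ v ∈ V, ⟪w, dvg v⟫ = -⟪grad w, v⟫ + ⟪trc w, ntr v⟫)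
    (CgW : ℝ) (hCgW0 : 0 ≤ CgW)
    (hCgW : ∀ w ∈ W, Real.sqrt hK * ‖ntr (grad w)‖ ≤ CgW * ‖grad w‖) :
    ‖grad uh‖ ≤ Real.sqrt lamMax * Real.sqrt ⟪c qh, qh⟫
      + CgW * (Real.sqrt hK)⁻¹ * ‖trc uh - uhat‖ := by
  set g := grad uh with hg
  have hgV : g ∈ V := hgradW uh huh
  -- key identity: ⟪g,g⟫ = -⟪c qh, g⟫ + ⟪trc uh - uhat, ntr g⟫
  have h1 : ⟪c qh, g⟫ = ⟪uh, dvg g⟫ - ⟪uhat, ntr g⟫ := hdef g hgV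
  have h2 : ⟪uh, dvg g⟫ = -⟪g, g⟫ + ⟪trc uh, ntr g⟫ := hibp uh huh g hgV
  have hkey : ⟪g, g⟫ = -⟪c qh, g⟫ + ⟪(trc uh - uhat : B), ntr g⟫ := by
    rw [inner_sub_left]; rw [h2] at h1; linarith
  rcases eq_or_ne g 0 with hg0 | hg0
  · rw [hg0, norm_zero]
    have h3 : 0 ≤ Real.sqrt lamMax * Real.sqrt ⟪c qh, qh⟫ :=
      mul_nonneg (Real.sqrt_nonneg _) (Real.sqrt_nonneg _)
    have h4 : 0 ≤ CgW * (Real.sqrt hK)⁻¹ * ‖trc uh - uhat‖ :=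
      mul_nonneg (mul_nonneg hCgW0 (inv_nonneg.mpr (Real.sqrt_nonneg _))) (norm_nonneg _)
    linarith
  · have hgpos : 0 < ‖g‖ := norm_pos_iff.mpr hg0
    have hsK : 0 < Real.sqrt hK := Real.sqrt_pos.mpr hhK
    -- bound on the c-term
    have hcs : ⟪c qh, -g⟫ ≤ Real.sqrt ⟪c qh, qh⟫ * Real.sqrt ⟪c g, g⟫ := by
      have := cs_psd c hc_sym hc_pos qh (-g)
      simpa [inner_neg_right, map_neg, inner_neg_left, neg_neg] using this
    have hcg : Real.sqrt ⟪c g, g⟫ ≤ Real.sqrt lamMax * ‖g‖ := by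
      have h5 : ⟪c g, g⟫ ≤ lamMax * ‖g‖ ^ 2 := hlam g
      calc Real.sqrt ⟪c g, g⟫ ≤ Real.sqrt (lamMax * ‖g‖ ^ 2) := Real.sqrt_le_sqrt h5
        _ = Real.sqrt lamMax * ‖g‖ := by
          rw [Real.sqrt_mul' _ (sq_nonneg ‖g‖), Real.sqrt_sq (norm_nonneg g)]
    have hA : -⟪c qh, g⟫ ≤ Real.sqrt lamMax * Real.sqrt ⟪c qh, qh⟫ * ‖g‖ := by
      have : ⟪c qh, -g⟫ ≤ Real.sqrt ⟪c qh, qh⟫ * (Real.sqrt lamMax * ‖g‖) :=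
        hcs.trans (mul_le_mul_of_nonneg_left hcg (Real.sqrt_nonneg _))
      rw [inner_neg_right] at this; linarith [this]
    -- bound on the boundary term
    have hntr : ‖ntr g‖ ≤ CgW * (Real.sqrt hK)⁻¹ * ‖g‖ := by
      have h := hCgW uh huh
      rw [← hg] at h
      rw [show CgW * (Real.sqrt hK)⁻¹ * ‖g‖ = CgW * ‖g‖ / Real.sqrt hK from by
        field_simp]
      exact (le_div_iff₀' hsK).mpr h
    have hB : ⟪(trc uh - uhat : B), ntr g⟫ ≤ CgW * (Real.sqrt hK)⁻¹ * ‖trc uh - uhat‖ * ‖g‖ := by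
      calc ⟪(trc uh - uhat : B), ntr g⟫ ≤ ‖trc uh - uhat‖ * ‖ntr g‖ :=
            real_inner_le_norm _ _
        _ ≤ ‖trc uh - uhat‖ * (CgW * (Real.sqrt hK)⁻¹ * ‖g‖) :=
            mul_le_mul_of_nonneg_left hntr (norm_nonneg _)
        _ = CgW * (Real.sqrt hK)⁻¹ * ‖trc uh - uhat‖ * ‖g‖ := by ring
    have hsq : ‖g‖ * ‖g‖ ≤ (Real.sqrt lamMax * Real.sqrt ⟪c qh, qh⟫
        + CgW * (Real.sqrt hK)⁻¹ * ‖trc uh - uhat‖) * ‖g‖ := by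
      have : ⟪g, g⟫ = ‖g‖ * ‖g‖ := real_inner_self_eq_norm_mul_norm g
      nlinarith [hkey, hA, hB]
    exact le_of_mul_le_mul_right (by linarith [hsq]) hgpos
end

section
/- With the setting of the discrete gradient map: suppose additionally there is a subspace Ṽ^⊥(K) ⊂ V(K) orthogonal to ∇W(K) such that every μ ∈ γṼ^⊥ := {v·n|_{∂K} : v ∈ Ṽ^⊥(K)} is attained. If v ∈ Ṽ^⊥(K) satisfies v·n|_{∂K} = P_{γṼ^⊥}(u_h − û_h), then ‖P_{γṼ^⊥}(u_h − û_h)‖²_{∂K} = (c q_h, v)_K, and consequently ‖P_{γṼ^⊥}(u_h − û_h)‖_{∂K} ≤ C_{Ṽ^⊥} λ_max^{1/2} h_K^{1/2} ‖q_h‖_{c,K} with C_{Ṽ^⊥} = sup{ ‖v‖_K / (h_K^{1/2}‖v·n‖_{∂K}) : v ∈ Ṽ^⊥(K), v·n ≠ 0 }. -/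
open scoped RealInnerProductSpace

/-- If Ṽ^⊥(K) ⊂ V(K) is L²(K)-orthogonal to ∇W(K), γṼ^⊥ = ntr(Ṽ^⊥), and
v ∈ Ṽ^⊥(K) has normal trace equal to P_{γṼ^⊥}(u_h − û_h), then
‖P_{γṼ^⊥}(u_h − û_h)‖²_{∂K} = (c q_h, v)_K, and consequently
‖P_{γṼ^⊥}(u_h − û_h)‖_{∂K} ≤ C_{Ṽ^⊥} λ_max^{1/2} h_K^{1/2} ‖q_h‖_{c,K}. -/
theorem stmt5 {E F B : Type*}
    [NormedAddCommGroup E] [InnerProductSpace ℝ E]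
    [NormedAddCommGroup F] [InnerProductSpace ℝ F]
    [NormedAddCommGroup B] [InnerProductSpace ℝ B]
    (V : Submodule ℝ E) (W : Submodule ℝ F)
    [FiniteDimensional ℝ V] [FiniteDimensional ℝ W]
    (grad : F →ₗ[ℝ] E) (dvg : E →ₗ[ℝ] F) (ntr : E →ₗ[ℝ] B) (trc : F →ₗ[ℝ] B)
    (c : E →ₗ[ℝ] E) (lamMax hK : ℝ) (hhK : 0 < hK) (hlam0 : 0 ≤ lamMax)
    (hc_sym : ∀ x y : E, ⟪c x, y⟫ = ⟪x, c y⟫)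
    (hc_pos : ∀ x : E, x ≠ 0 → 0 < ⟪c x, x⟫)
    (hlam : ∀ x : E, ⟪c x, x⟫ ≤ lamMax * ‖x‖ ^ 2)
    (uh : F) (huh : uh ∈ W) (uhat : B) (qh : E) (hqh : qh ∈ V)
    (hdef : ∀ v ∈ V, ⟪c qh, v⟫ = ⟪uh, dvg v⟫ - ⟪uhat, ntr v⟫)
    (hibp : ∀ w ∈ W, ∀ v ∈ V, ⟪w, dvg v⟫ = -⟪grad w, v⟫ + ⟪trc w, ntr v⟫)
    (Vperp : Submodule ℝ E) (hVperpV : Vperp ≤ V)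
    (horth : ∀ w ∈ W, ∀ v ∈ Vperp, ⟪grad w, v⟫ = 0)
    (N : Submodule ℝ B) (hN : N = Submodule.map ntr Vperp)
    [N.HasOrthogonalProjection]
    (Cperp : ℝ) (hCperp0 : 0 ≤ Cperp)
    (hCperp : ∀ v ∈ Vperp, ntr v ≠ 0 → ‖v‖ ≤ Cperp * (Real.sqrt hK * ‖ntr v‖))
    (v : E) (hv : v ∈ Vperp)
    (hvtrace : ntr v = (N.orthogonalProjectionOnto (trc uh - uhat) : B)) :
    ‖(N.orthogonalProjectionOnto (trc uh - uhat) : B)‖ ^ 2 = ⟪c qh, v⟫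
    ∧ ‖(N.orthogonalProjectionOnto (trc uh - uhat) : B)‖
        ≤ Cperp * Real.sqrt lamMax * Real.sqrt hK * Real.sqrt ⟪c qh, qh⟫ := by

  set x : B := trc uh - uhat with hx
  set P : B := (N.orthogonalProjectionOnto x : B) with hP
  have hPmem : P ∈ N := (N.orthogonalProjectionOnto x).2
  -- first part
  have h1 : ⟪c qh, v⟫ = ⟪x, ntr v⟫ := by
    rw [hdef v (hVperpV hv), hibp uh huh v (hVperpV hv), horth uh huh v hv, hx,
      inner_sub_left]
    ring
  have hperp : ⟪x - P, P⟫ = 0 :=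
    N.starProjection_inner_eq_zero x P hPmem
  have h2 : ⟪x, P⟫ = ‖P‖ ^ 2 := by
    have := hperp
    rw [inner_sub_left, sub_eq_zero] at this
    rw [this, real_inner_self_eq_norm_sq]
  have hfirst : ‖P‖ ^ 2 = ⟪c qh, v⟫ := by
    rw [h1, hvtrace]; exact h2.symm
  refine ⟨hfirst, ?_⟩
  -- nonnegativity of form
  have hc_nn : ∀ y : E, 0 ≤ ⟪c y, y⟫ := by
    intro y
    by_cases hy : y = 0
    · simp [hy]
    · exact (hc_pos y hy).le
  -- Cauchy–Schwarz for the form c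
  have hCS : ⟪c qh, v⟫ ≤ Real.sqrt ⟪c qh, qh⟫ * Real.sqrt ⟪c v, v⟫ := by
    set a : ℝ := ⟪c qh, qh⟫
    set b : ℝ := ⟪c qh, v⟫
    set d : ℝ := ⟪c v, v⟫
    have ha : 0 ≤ a := hc_nn qh
    have hd : 0 ≤ d := hc_nn v
    have hb2 : b ^ 2 ≤ a * d := by
      by_cases hq : qh = 0
      · have : b = 0 := by simp [b, hq]
        nlinarith
      · have haP : 0 < a := hc_pos qh hq
        have key := hc_nn (v - (b / a) • qh)
        have hsymm : ⟪c v, qh⟫ = b := by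
          rw [hc_sym, real_inner_comm]
        rw [map_sub, map_smul, inner_sub_left, inner_sub_right, inner_sub_right,
          real_inner_smul_left, real_inner_smul_right, real_inner_smul_left,
          real_inner_smul_right] at key
        rw [hsymm] at key
        have hb' : ⟪c qh, v⟫ = b := rfl
        rw [hb'] at key
        have key' : 0 ≤ d - b / a * b - (b / a * b - b / a * (b / a * a)) := key
        have e1 : b / a * (b / a * a) = b / a * b := by field_simp
        have e2 : b / a * b = b ^ 2 / a := by field_simp
        rw [e1, e2] at key'
        have : b ^ 2 / a ≤ d := by linarith
        have := (div_le_iff₀ haP).mp this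
        nlinarith
    calc b ≤ |b| := le_abs_self b
      _ = Real.sqrt (b ^ 2) := (Real.sqrt_sq_eq_abs b).symm
      _ ≤ Real.sqrt (a * d) := Real.sqrt_le_sqrt hb2
      _ = Real.sqrt a * Real.sqrt d := Real.sqrt_mul ha d
  have hdbound : Real.sqrt ⟪c v, v⟫ ≤ Real.sqrt lamMax * ‖v‖ := by
    calc Real.sqrt ⟪c v, v⟫ ≤ Real.sqrt (lamMax * ‖v‖ ^ 2) := Real.sqrt_le_sqrt (hlam v)
      _ = Real.sqrt lamMax * Real.sqrt (‖v‖ ^ 2) := Real.sqrt_mul hlam0 _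
      _ = Real.sqrt lamMax * ‖v‖ := by rw [Real.sqrt_sq (norm_nonneg v)]
  have hPn : ‖P‖ = ‖ntr v‖ := by rw [hvtrace, hP]
  by_cases hnv : ntr v = 0
  · have hP0 : ‖P‖ = 0 := by rw [hPn, hnv, norm_zero]
    rw [hP0]
    positivity
  · have hnorm : ‖v‖ ≤ Cperp * (Real.sqrt hK * ‖ntr v‖) := hCperp v hv hnv
    have hPpos : 0 < ‖P‖ := by
      rw [hPn]; exact norm_pos_iff.mpr hnv
    have hchain : ‖P‖ ^ 2 ≤ Real.sqrt ⟪c qh, qh⟫ * (Real.sqrt lamMax * (Cperp * (Real.sqrt hK * ‖P‖))) := by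
      have h3 : ‖P‖ ^ 2 ≤ Real.sqrt ⟪c qh, qh⟫ * Real.sqrt ⟪c v, v⟫ := hfirst ▸ hCS
      have h4 : Real.sqrt ⟪c qh, qh⟫ * Real.sqrt ⟪c v, v⟫
          ≤ Real.sqrt ⟪c qh, qh⟫ * (Real.sqrt lamMax * ‖v‖) :=
        mul_le_mul_of_nonneg_left hdbound (Real.sqrt_nonneg _)
      have h5 : ‖v‖ ≤ Cperp * (Real.sqrt hK * ‖P‖) := by rw [hPn]; exact hnorm
      calc ‖P‖ ^ 2 ≤ Real.sqrt ⟪c qh, qh⟫ * (Real.sqrt lamMax * ‖v‖) := le_trans h3 h4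
        _ ≤ Real.sqrt ⟪c qh, qh⟫ * (Real.sqrt lamMax * (Cperp * (Real.sqrt hK * ‖P‖))) := by
            exact mul_le_mul_of_nonneg_left
              (mul_le_mul_of_nonneg_left h5 (Real.sqrt_nonneg _)) (Real.sqrt_nonneg _)
    have := (mul_le_mul_iff_of_pos_right hPpos).mp (by nlinarith [hchain] :
      ‖P‖ * ‖P‖ ≤ (Cperp * Real.sqrt lamMax * Real.sqrt hK * Real.sqrt ⟪c qh, qh⟫) * ‖P‖)
    exact this
end

section
/- Let V(K) ⊂ H(div,K) be finite-dimensional and suppose the identity {μ ∈ M(∂K) : ⟨μ,1⟩_{∂K} = 0} = {v·n|_{∂K} : v ∈ V(K), ∇·v = 0} holds. Then for any û_h ∈ M(∂K) and any q_h ∈ V(K) satisfying (c q_h, v)_K + ⟨û_h − avg(û_h), v·n⟩_{∂K} = 0 for all divergence-free v ∈ V(K), one has ‖û_h − avg(û_h)‖_{∂K} ≤ λ_max^{1/2} ‖q_h‖_{c,K} · C h_K^{1/2}, where avg(û_h) is the mean of û_h over ∂K and C = sup over μ ∈ M(∂K) with mean zero of inf over divergence-free v ∈ V(K) with v·n = μ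 of ‖v‖_K/(h_K^{1/2}‖v·n‖_{∂K}). -/
open scoped RealInnerProductSpace

lemma cs_aux {E : Type*} [NormedAddCommGroup E] [InnerProductSpace ℝ E]
    (c : E →ₗ[ℝ] E) (hsym : ∀ x y : E, ⟪c x, y⟫ = ⟪x, c y⟫)
    (hpos : ∀ x : E, 0 ≤ ⟪c x, x⟫) (x y : E) :
    ⟪c x, y⟫ ^ 2 ≤ ⟪c x, x⟫ * ⟪c y, y⟫ := by
  have h : ∀ t : ℝ, 0 ≤ ⟪c y, y⟫ * (t * t) + (2 * ⟪c x, y⟫) * t + ⟪c x, x⟫ := by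
    intro t
    have h0 := hpos (x + t • y)
    have hxy : ⟪c y, x⟫ = ⟪c x, y⟫ := by rw [hsym, real_inner_comm]
    have e : ⟪c (x + t • y), x + t • y⟫
        = ⟪c y, y⟫ * (t * t) + (2 * ⟪c x, y⟫) * t + ⟪c x, x⟫ := by
      simp only [map_add, map_smul, inner_add_left, inner_add_right,
        real_inner_smul_left, real_inner_smul_right, hxy]
      ring
    linarith [e ▸ h0]
  have hd := discrim_le_zero h
  rw [discrim] at hd
  nlinarith [hd]

/-- If {μ ∈ M(∂K) : ⟨μ,1⟩ = 0} = {v·n : v ∈ V(K), ∇·v = 0}, and q_h satisfies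
(c q_h, v)_K + ⟨û_h − avg(û_h), v·n⟩_{∂K} = 0 for all divergence-free v ∈ V(K), then
‖û_h − avg(û_h)‖_{∂K} ≤ λ_max^{1/2} ‖q_h‖_{c,K} · C h_K^{1/2}, where avg(û_h) is the mean of
û_h over ∂K (here avg(û_h)·1 = (⟨û_h,1⟩/⟨1,1⟩) • 1 with 1 the constant function), and the
constant C (assumed finite/attained) realizes the sup-inf bound ‖v‖ ≤ C h^{1/2}‖v·n‖. -/
theorem stmt6 {E F B : Type*}
    [NormedAddCommGroup E] [InnerProductSpace ℝ E]
    [NormedAddCommGroup F] [InnerProductSpace ℝ F]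
    [NormedAddCommGroup B] [InnerProductSpace ℝ B]
    (V : Submodule ℝ E) [FiniteDimensional ℝ V]
    (M : Submodule ℝ B) [FiniteDimensional ℝ M]
    (dvg : E →ₗ[ℝ] F) (ntr : E →ₗ[ℝ] B)
    (c : E →ₗ[ℝ] E) (lamMax hK Cc : ℝ) (hhK : 0 < hK) (hC0 : 0 ≤ Cc)
    (hc_sym : ∀ x y : E, ⟪c x, y⟫ = ⟪x, c y⟫)
    (hc_pos : ∀ x : E, x ≠ 0 → 0 < ⟪c x, x⟫)
    (hlam : ∀ x : E, ⟪c x, x⟫ ≤ lamMax * ‖x‖ ^ 2)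
    (one : B) (hone : one ∈ M) (hone0 : one ≠ 0)
    (hident : ∀ μ : B, (μ ∈ M ∧ ⟪μ, one⟫ = 0) ↔ ∃ v ∈ V, dvg v = 0 ∧ ntr v = μ)
    (uhat : B) (huhat : uhat ∈ M) (qh : E) (hqh : qh ∈ V)
    (hq : ∀ v ∈ V, dvg v = 0 →
      ⟪c qh, v⟫ + ⟪uhat - (⟪uhat, one⟫ / ⟪one, one⟫) • one, ntr v⟫ = 0)
    (hC : ∀ μ ∈ M, ⟪μ, one⟫ = 0 →
      ∃ v ∈ V, dvg v = 0 ∧ ntr v = μ ∧ ‖v‖ ≤ Cc * (Real.sqrt hK * ‖μ‖)) :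
    ‖uhat - (⟪uhat, one⟫ / ⟪one, one⟫) • one‖
      ≤ Real.sqrt lamMax * Real.sqrt ⟪c qh, qh⟫ * (Cc * Real.sqrt hK) := by
  set μ : B := uhat - (⟪uhat, one⟫ / ⟪one, one⟫) • one with hμdef
  have hpos : ∀ x : E, 0 ≤ ⟪c x, x⟫ := by
    intro x
    rcases eq_or_ne x 0 with h | h
    · simp [h]
    · exact (hc_pos x h).le
  have honeself : ⟪one, one⟫ ≠ 0 := by
    simpa [real_inner_self_eq_norm_sq] using pow_ne_zero 2 (norm_ne_zero_iff.mpr hone0)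
  have hμM : μ ∈ M := M.sub_mem huhat (M.smul_mem _ hone)
  have hμ0 : ⟪μ, one⟫ = 0 := by
    rw [hμdef, inner_sub_left, real_inner_smul_left, div_mul_cancel₀ _ honeself, sub_self]
  obtain ⟨v, hvV, hdv, hntr, hbound⟩ := hC μ hμM hμ0
  have heq := hq v hvV hdv
  rw [hntr] at heq
  have hμsq : ‖μ‖ ^ 2 = -⟪c qh, v⟫ := by
    rw [← real_inner_self_eq_norm_sq]; linarith
  set A : ℝ := Real.sqrt lamMax * Real.sqrt ⟪c qh, qh⟫ * (Cc * Real.sqrt hK) with hA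
  have hμnn : (0:ℝ) ≤ ‖μ‖ := norm_nonneg μ
  have hAnn : 0 ≤ A := by
    apply mul_nonneg (mul_nonneg (Real.sqrt_nonneg _) (Real.sqrt_nonneg _))
    exact mul_nonneg hC0 (Real.sqrt_nonneg _)
  rcases lt_or_ge lamMax 0 with hneg | hlam0
  · have hv0 : v = 0 := by
      by_contra h
      have h1 := hc_pos v h
      have h2 := hlam v
      have h3 : 0 < ‖v‖ ^ 2 := pow_pos (norm_pos_iff.mpr h) 2
      nlinarith
    have hm0 : μ = 0 := by rw [← hntr, hv0, map_zero]
    rw [hm0]; simpa using hAnn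
  · have hcs := cs_aux c hc_sym hpos qh v
    have hcvv : ⟪c v, v⟫ ≤ lamMax * ‖v‖ ^ 2 := hlam v
    have sl := Real.sq_sqrt hlam0
    have sq := Real.sq_sqrt (hpos qh)
    have sh := Real.sq_sqrt hhK.le
    have hvnn : (0:ℝ) ≤ ‖v‖ := norm_nonneg v
    have h1 : (‖μ‖ ^ 2) ^ 2 = ⟪c qh, v⟫ ^ 2 := by rw [hμsq]; ring
    have h2 : ⟪c qh, qh⟫ * ⟪c v, v⟫ ≤ ⟪c qh, qh⟫ * (lamMax * ‖v‖ ^ 2) :=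
      mul_le_mul_of_nonneg_left hcvv (hpos qh)
    have h3 : ‖v‖ ^ 2 ≤ (Cc * (Real.sqrt hK * ‖μ‖)) ^ 2 := by
      apply pow_le_pow_left₀ hvnn hbound
    have s2 : ⟪c qh, qh⟫ * (lamMax * ‖v‖ ^ 2)
        ≤ ⟪c qh, qh⟫ * (lamMax * (Cc * (Real.sqrt hK * ‖μ‖)) ^ 2) :=
      mul_le_mul_of_nonneg_left (mul_le_mul_of_nonneg_left h3 hlam0) (hpos qh)
    have s3 : ⟪c qh, qh⟫ * (lamMax * (Cc * (Real.sqrt hK * ‖μ‖)) ^ 2) = (A * ‖μ‖) ^ 2 := by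
      rw [hA, show (Real.sqrt lamMax * Real.sqrt ⟪c qh, qh⟫ * (Cc * Real.sqrt hK) * ‖μ‖) ^ 2
        = Real.sqrt lamMax ^ 2 * Real.sqrt ⟪c qh, qh⟫ ^ 2 * (Cc ^ 2 * Real.sqrt hK ^ 2) * ‖μ‖ ^ 2
        from by ring, sl, sq,
        show (Cc * (Real.sqrt hK * ‖μ‖)) ^ 2 = Cc ^ 2 * (Real.sqrt hK ^ 2 * ‖μ‖ ^ 2)
        from by ring, sh]; ring
    have key : (‖μ‖ ^ 2) ^ 2 ≤ (A * ‖μ‖) ^ 2 := by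
      rw [← s3]; linarith
    have key2 : ‖μ‖ ^ 2 ≤ A * ‖μ‖ := by
      have h := Real.sqrt_le_sqrt key
      rwa [Real.sqrt_sq (sq_nonneg ‖μ‖), Real.sqrt_sq (mul_nonneg hAnn hμnn)] at h
    rcases eq_or_lt_of_le hμnn with h | h
    · rw [← h]; exact hAnn
    · nlinarith [key2, h]
end

section
/- Let V be a finite-dimensional subspace of L²(K), and let Π : L²(K) → V be defined (for the scalar projection Π_W) by: (Πu, w)_K = (u, w)_K for all w ∈ W̃, and ⟨Πu, ŵ⟩_{∂K} = ⟨u, ŵ⟩_{∂K} for all ŵ ∈ M_S, where W̃ ⊂ W, dim M_S = dim W − dim W̃, and ‖P_{M_S}(γ(·))‖ is a norm on W̃^⊥. Then Π is well defined (the square linear system is nonsingular) and Πw = w for all w ∈ W. -/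
open scoped RealInnerProductSpace

/-- The projection Π defined by (Πu, w)_K = (u, w)_K for w ∈ W̃ and
⟨γ(Πu), ŵ⟩_{∂K} = ⟨γ(u), ŵ⟩_{∂K} for ŵ ∈ M_S, with dim M_S = dim W − dim W̃ and
‖P_{M_S}(γ(·))‖ a norm on W̃^⊥ ∩ W, is well defined (the square system is nonsingular,
i.e. there is a unique solution in W) and satisfies Πw = w for all w ∈ W. -/
theorem stmt12 {E B : Type*}
    [NormedAddCommGroup E] [InnerProductSpace ℝ E]
    [NormedAddCommGroup B] [InnerProductSpace ℝ B]
    (γ : E →ₗ[ℝ] B)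
    (W Wt : Submodule ℝ E) (hWt : Wt ≤ W) [FiniteDimensional ℝ W]
    (MS : Submodule ℝ B) [Submodule.HasOrthogonalProjection MS] [FiniteDimensional ℝ MS]
    (hdim : Module.finrank ℝ MS = Module.finrank ℝ W - Module.finrank ℝ Wt)
    (hnorm : ∀ w ∈ Wtᗮ ⊓ W, (Submodule.orthogonalProjectionOnto MS (γ w) : B) = 0 → w = 0) :
    (∀ u : E, ∃! p : E, p ∈ W ∧ (∀ w ∈ Wt, ⟪p, w⟫ = ⟪u, w⟫)
        ∧ (∀ m ∈ MS, ⟪γ p, m⟫ = ⟪γ u, m⟫))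
    ∧ (∀ w ∈ W, ∀ p : E, (p ∈ W ∧ (∀ w' ∈ Wt, ⟪p, w'⟫ = ⟪w, w'⟫)
        ∧ (∀ m ∈ MS, ⟪γ p, m⟫ = ⟪γ w, m⟫)) → p = w) := by
  haveI : FiniteDimensional ℝ Wt := Submodule.finiteDimensional_of_le hWt
  -- general uniqueness
  have uniq : ∀ u p q : E,
      (p ∈ W ∧ (∀ w ∈ Wt, ⟪p, w⟫ = ⟪u, w⟫) ∧ (∀ m ∈ MS, ⟪γ p, m⟫ = ⟪γ u, m⟫)) →
      (q ∈ W ∧ (∀ w ∈ Wt, ⟪q, w⟫ = ⟪u, w⟫) ∧ (∀ m ∈ MS, ⟪γ q, m⟫ = ⟪γ u, m⟫)) →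
      p = q := by
    rintro u p q ⟨hpW, hp1, hp2⟩ ⟨hqW, hq1, hq2⟩
    have hmem : p - q ∈ Wtᗮ ⊓ W := by
      refine ⟨?_, W.sub_mem hpW hqW⟩
      intro w hw
      have : ⟪w, p - q⟫ = 0 := by
        rw [inner_sub_right, real_inner_comm p w, real_inner_comm q w,
          hp1 w hw, hq1 w hw, sub_self]
      exact this
    have hproj : (Submodule.orthogonalProjectionOnto MS (γ (p - q)) : B) = 0 := by
      have hmemo : γ (p - q) ∈ MSᗮ := by
        intro m hm
        rw [map_sub, inner_sub_right, real_inner_comm (γ p) m, real_inner_comm (γ q) m,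
          hp2 m hm, hq2 m hm, sub_self]
      rw [Submodule.orthogonalProjectionOnto_apply_of_mem_orthogonal hmemo]
      rfl
    have := hnorm _ hmem hproj
    exact sub_eq_zero.mp this
  -- existence
  have exist : ∀ u : E, ∃ p : E, p ∈ W ∧ (∀ w ∈ Wt, ⟪p, w⟫ = ⟪u, w⟫)
      ∧ (∀ m ∈ MS, ⟪γ p, m⟫ = ⟪γ u, m⟫) := by
    intro u
    set T : W →ₗ[ℝ] Wt × MS := LinearMap.prod
      ((Submodule.orthogonalProjectionOnto Wt).toLinearMap.comp W.subtype)
      ((Submodule.orthogonalProjectionOnto MS).toLinearMap.comp (γ.comp W.subtype)) with hT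
    have hinj : Function.Injective T := by
      rw [injective_iff_map_eq_zero]
      intro w hw
      have h1 : (Submodule.orthogonalProjectionOnto Wt (w : E) : Wt) = 0 := congrArg Prod.fst hw
      have h2 : (Submodule.orthogonalProjectionOnto MS (γ (w : E)) : MS) = 0 := congrArg Prod.snd hw
      have hwo : (w : E) ∈ Wtᗮ := by
        have := Submodule.sub_starProjection_mem_orthogonal (K := Wt) (w : E)
        change (w : E) - (Submodule.orthogonalProjectionOnto Wt (w : E) : E) ∈ Wtᗮ at this
        rwa [h1, ZeroMemClass.coe_zero, sub_zero] at this
      have : (w : E) = 0 := by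
        apply hnorm _ ⟨hwo, w.2⟩
        rw [h2]; rfl
      exact Subtype.ext this
    have hfr : Module.finrank ℝ W = Module.finrank ℝ (Wt × MS) := by
      have hle : Module.finrank ℝ Wt ≤ Module.finrank ℝ W :=
        Submodule.finrank_mono hWt
      rw [Module.finrank_prod, hdim]
      omega
    have hsurj : Function.Surjective T :=
      (LinearMap.injective_iff_surjective_of_finrank_eq_finrank hfr).mp hinj
    obtain ⟨p, hp⟩ := hsurj (Submodule.orthogonalProjectionOnto Wt u, Submodule.orthogonalProjectionOnto MS (γ u))
    have hp1 : (Submodule.orthogonalProjectionOnto Wt (p : E) : Wt) = Submodule.orthogonalProjectionOnto Wt u :=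
      by have := congrArg Prod.fst hp; exact this
    have hp2 : (Submodule.orthogonalProjectionOnto MS (γ (p : E)) : MS) = Submodule.orthogonalProjectionOnto MS (γ u) :=
      congrArg Prod.snd hp
    refine ⟨p, p.2, ?_, ?_⟩
    · intro w hw
      have e1 : ⟪(p : E) - (Submodule.orthogonalProjectionOnto Wt (p : E) : E), w⟫ = 0 :=
        Submodule.starProjection_inner_eq_zero _ w hw
      have e2 : ⟪u - (Submodule.orthogonalProjectionOnto Wt u : E), w⟫ = 0 :=
        Submodule.starProjection_inner_eq_zero _ w hw
      rw [inner_sub_left, sub_eq_zero] at e1 e2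
      rw [e1, e2, hp1]
    · intro m hm
      have e1 : ⟪γ (p : E) - (Submodule.orthogonalProjectionOnto MS (γ (p : E)) : B), m⟫ = 0 :=
        Submodule.starProjection_inner_eq_zero _ m hm
      have e2 : ⟪γ u - (Submodule.orthogonalProjectionOnto MS (γ u) : B), m⟫ = 0 :=
        Submodule.starProjection_inner_eq_zero _ m hm
      rw [inner_sub_left, sub_eq_zero] at e1 e2
      rw [e1, e2, hp2]
  refine ⟨fun u => ?_, fun w hw p hp => ?_⟩
  · obtain ⟨p, hp⟩ := exist u
    exact ⟨p, hp, fun q hq => uniq u q p hq hp⟩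
  · exact uniq w p w hp ⟨hw, fun w' _ => rfl, fun m _ => rfl⟩
end

section
/- Divergence-free property of the post-processed velocity: let P_h(u_h, û_h) ∈ V*(K) satisfy ⟨P_h(u_h,û_h)·n, ŵ⟩_{∂K} = ⟨û_h·n, ŵ⟩_{∂K} for all ŵ ∈ M(∂K), and (P_h(u_h,û_h), ∇q)_K = (u_h, ∇q)_K for all q ∈ W(K). If (u_h, û_h) satisfies the weak incompressibility −(u_h, ∇q)_K + ⟨û_h·n, q⟩_{∂K} = 0 for all q ∈ W(K), and ∇·V*(K) = W(K) with W(K) containing traces relevant to M(∂K) (i.e. q|_{∂K} tested against M(∂K) suffices), then (∇·P_h(u_h,û_h), q)_K = 0 for all q ∈ W(K), hence ∇·P_h(u_h,û_h) = 0 on K. -/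
open scoped RealInnerProductSpace

/-- Divergence-free property of the post-processed velocity: if b ∈ V*(K)
matches the numerical trace weakly against M(∂K) and matches u_h against gradients of W(K),
weak incompressibility holds, ∇W(K) ⊂ V*(K), ∇·V*(K) = W(K), traces of W(K) lie in M(∂K),
and elementwise integration by parts holds, then (∇·b, q)_K = 0 for all q ∈ W(K), and ∇·b = 0. -/
theorem stmt17 {E HK B : Type*}
    [NormedAddCommGroup E] [InnerProductSpace ℝ E]
    [NormedAddCommGroup HK] [InnerProductSpace ℝ HK]
    [NormedAddCommGroup B] [InnerProductSpace ℝ B]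
    (Vs : Submodule ℝ E) (W : Submodule ℝ HK) (M : Submodule ℝ B)
    (dvg : E →ₗ[ℝ] HK) (grad : HK →ₗ[ℝ] E) (ntr : E →ₗ[ℝ] B) (trc : HK →ₗ[ℝ] B)
    (hgrad : ∀ q ∈ W, grad q ∈ Vs)
    (hdivVs : Submodule.map dvg Vs = W)
    (hibp : ∀ v ∈ Vs, ∀ q ∈ W, ⟪dvg v, q⟫ = -⟪v, grad q⟫ + ⟪ntr v, trc q⟫)
    (htrc : ∀ q ∈ W, trc q ∈ M)
    (b : E) (hb : b ∈ Vs)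
    (nhat : B) (u : E)
    (h1 : ∀ w ∈ M, ⟪ntr b, w⟫ = ⟪nhat, w⟫)
    (h2 : ∀ q ∈ W, ⟪b, grad q⟫ = ⟪u, grad q⟫)
    (hincomp : ∀ q ∈ W, -⟪u, grad q⟫ + ⟪nhat, trc q⟫ = 0) :
    (∀ q ∈ W, ⟪dvg b, q⟫ = 0) ∧ dvg b = 0 := by
  have key : ∀ q ∈ W, ⟪dvg b, q⟫ = 0 := by
    intro q hq
    rw [hibp b hb q hq, h2 q hq, h1 _ (htrc q hq)]
    exact hincomp q hq
  refine ⟨key, ?_⟩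
  have hmem : dvg b ∈ W := hdivVs ▸ ⟨b, hb, rfl⟩
  exact inner_self_eq_zero.mp (key _ hmem)
end
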